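/- For every integer D ≥ 2 there exist a positive integer m with m ≤ 2(D−1)(2D+1) and a homogeneous noncommutative polynomial p : (Fin m → Fin 2) → ℂ of degree m in two variables such that p is a matrix polynomial identity for dimension D−1 (Σ_j p(j)·X_{j_1}⋯X_{j_m} = 0 for all X₁,X₂ ∈ M_{D−1}(ℂ)), but p is not a matrix polynomial identity for dimension D: there exist X₁, X₂ ∈ M_D(ℂ) with Σ_j p(j)·X_{j_1}⋯X_{j_m} ≠ 0. -/

import Mathlib

/-!
Put `P(X₀, X₁) = ∑_σ sign σ · X₀^{σ 0} X₁ X₀^{σ 1} X₁ ⋯ X₀^{σ (D-1)} X₁`, the sum over the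
permutations `σ` of `{0, …, D-1}`; it is homogeneous of degree `D(D-1)/2 + D`. The value
`P(A, Y)` is the alternatization of the multilinear map `(B_t)_t ↦ ∏_t B_t Y`, evaluated at
the powers `1, A, …, A^{D-1}`. For `A` of size `D - 1` these `D` powers are linearly dependent
by Cayley–Hamilton, so `P` vanishes. For `A = diag(0, 1, …, D-1)` and the cyclic shift `Y`, the
`(0, 0)` entry of `∏_t A^{a_t} Y` is `∏_t t^{a_t}`, so the `(0, 0)` entry of `P(A, Y)` is a
Vandermonde determinant with distinct nodes.
-/

open Matrix

/-- The ordered matrix product `X_{i_1} ⋯ X_{i_n}` associated to an index string `i`. -/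
noncomputable def mpsProd {d D n : ℕ} (X : Fin d → Matrix (Fin D) (Fin D) ℂ)
    (i : Fin n → Fin d) : Matrix (Fin D) (Fin D) ℂ :=
  ((List.finRange n).map fun t => X (i t)).prod

open Equiv Finset

section Words

variable {d m D : ℕ}

lemma mpsProd_eq_prod_ofFn (X : Fin d → Matrix (Fin D) (Fin D) ℂ) (i : Fin m → Fin d) :
    mpsProd X i = (List.ofFn (X ∘ i)).prod := by
  rw [mpsProd, List.ofFn_eq_map]
  rfl

lemma mpsProd_get_comp_cast (X : Fin d → Matrix (Fin D) (Fin D) ℂ) (l : List (Fin d))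
    (h : m = l.length) : mpsProd X (l.get ∘ Fin.cast h) = (l.map X).prod := by
  subst h
  rw [mpsProd_eq_prod_ofFn, ← List.map_ofFn, Fin.cast_refl, Function.comp_id, List.ofFn_get]

noncomputable def ofWords {ι : Type*} [Fintype ι] (c : ι → ℂ) (w : ι → Fin m → Fin d) :
    (Fin m → Fin d) → ℂ :=
  fun j => ∑ i, if w i = j then c i else 0

lemma sum_ofWords_smul_mpsProd {ι : Type*} [Fintype ι] (c : ι → ℂ) (w : ι → Fin m → Fin d)
    (X : Fin d → Matrix (Fin D) (Fin D) ℂ) :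
    ∑ j, ofWords c w j • mpsProd X j = ∑ i, c i • mpsProd X (w i) := by
  classical
  simp only [ofWords, Finset.sum_smul, ite_smul, zero_smul]
  rw [Finset.sum_comm]
  exact Finset.sum_congr rfl fun i _ => by rw [Finset.sum_ite_eq]; simp

end Words

def powWord {n : ℕ} (a : Fin n → ℕ) : List (Fin 2) :=
  (List.ofFn fun t => List.replicate (a t) 0 ++ [1]).flatten

lemma length_powWord {n : ℕ} (a : Fin n → ℕ) : (powWord a).length = ∑ t, (a t + 1) := by
  simp [powWord, List.length_flatten, List.map_ofFn, Function.comp_def, List.sum_ofFn]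

lemma length_powWord_perm {n : ℕ} (σ : Perm (Fin n)) :
    (powWord fun t => (σ t : ℕ)).length = n * (n - 1) / 2 + n := by
  rw [length_powWord, Finset.sum_add_distrib, Equiv.sum_comp σ (fun t => (t : ℕ)),
    Fin.sum_univ_eq_sum_range (fun i => i), Finset.sum_range_id]
  simp

lemma prod_map_powWord {M : Type*} [Monoid M] {n : ℕ} (a : Fin n → ℕ) (X : Fin 2 → M) :
    ((powWord a).map X).prod = (List.ofFn fun t => X 0 ^ a t * X 1).prod := by
  simp [powWord, List.map_flatten, List.prod_flatten, List.map_ofFn, Function.comp_def,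
    List.prod_replicate]

section AltProd

variable {K A : Type*} [CommRing K] [Ring A] [Algebra K A]

noncomputable def altProdMulRight (n : ℕ) (Y : A) : A [⋀^Fin n]→ₗ[K] A :=
  MultilinearMap.alternatization
    ((MultilinearMap.mkPiAlgebraFin K n A).compLinearMap fun _ => LinearMap.mulRight K Y)

lemma altProdMulRight_apply (n : ℕ) (Y : A) (v : Fin n → A) :
    altProdMulRight (K := K) n Y v
      = ∑ σ : Perm (Fin n), ((Perm.sign σ : ℤ) : K) • (List.ofFn fun t => v (σ t) * Y).prod := by
  simp [altProdMulRight, MultilinearMap.alternatization_apply, Units.smul_def,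
    Int.cast_smul_eq_zsmul]

end AltProd

lemma not_linearIndependent_pow_of_card_lt {K ι : Type*} [CommRing K] [Nontrivial K]
    [Fintype ι] [DecidableEq ι] (A : Matrix ι ι K) {n : ℕ} (hn : Fintype.card ι < n) :
    ¬LinearIndependent K fun k : Fin n => A ^ (k : ℕ) := by
  rw [Fintype.not_linearIndependent_iff]
  have hdeg := A.charpoly_natDegree_eq_dim
  refine ⟨fun k => A.charpoly.coeff k, ?_, ⟨_, hn⟩, ?_⟩
  · rw [Fin.sum_univ_eq_sum_range (fun k => A.charpoly.coeff k • A ^ k),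
      ← Polynomial.aeval_eq_sum_range' (by omega), Matrix.aeval_self_charpoly]
  · have hlead := A.charpoly_monic.coeff_natDegree
    rw [hdeg] at hlead
    simp [hlead]

section CycleShift

open Fin.NatCast

variable {R : Type*} [CommRing R] {n : ℕ} [NeZero n]

def cycleShift (n : ℕ) [NeZero n] : Matrix (Fin n) (Fin n) R :=
  of fun a b => if b = a + 1 then 1 else 0

lemma diagonal_mul_cycleShift_apply (c : Fin n → R) (s j : Fin n) :
    (diagonal c * cycleShift n : Matrix (Fin n) (Fin n) R) s j
      = if j = s + 1 then c s else 0 := by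
  simp [cycleShift]

lemma prod_ofFn_diagonal_mul_cycleShift_apply {k : ℕ} (c : Fin k → Fin n → R) (s j : Fin n) :
    ((List.ofFn fun t => diagonal (c t) * cycleShift n).prod : Matrix (Fin n) (Fin n) R) s j
      = (∏ t, c t (s + (t : ℕ))) * if j = s + (k : ℕ) then 1 else 0 := by
  induction k generalizing s with
  | zero => simp [Matrix.one_apply, eq_comm]
  | succ k ih =>
    rw [List.ofFn_succ, List.prod_cons, Matrix.mul_apply]
    simp only [diagonal_mul_cycleShift_apply, ite_mul, zero_mul, Finset.sum_ite_eq',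
      Finset.mem_univ, if_true, ih, Fin.prod_univ_succ]
    have hshift (x : ℕ) : s + 1 + (x : Fin n) = s + ((x + 1 : ℕ) : Fin n) := by
      rw [Nat.cast_succ, add_assoc, add_comm 1]
    simp only [hshift, Fin.val_succ, Fin.val_zero, Nat.cast_zero, add_zero, mul_assoc]

lemma altProdMulRight_cycleShift_apply_zero (d : Fin n → R) :
    altProdMulRight (K := R) n (cycleShift n) (fun k => diagonal d ^ (k : ℕ)) 0 0
      = (vandermonde d).det := by
  rw [← det_transpose, det_apply, altProdMulRight_apply, Matrix.sum_apply]
  refine Finset.sum_congr rfl fun σ _ => ?_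
  simp [diagonal_pow, prod_ofFn_diagonal_mul_cycleShift_apply, Units.smul_def]

end CycleShift

lemma altProdMulRight_cycleShift_ne_zero {R : Type*} [CommRing R] [IsDomain R] {n : ℕ}
    [NeZero n] {d : Fin n → R} (hd : Function.Injective d) :
    altProdMulRight (K := R) n (cycleShift n) (fun k => diagonal d ^ (k : ℕ)) ≠ 0 := by
  intro h
  have h00 := congrFun (congrFun h 0) 0
  rw [altProdMulRight_cycleShift_apply_zero] at h00
  exact det_vandermonde_ne_zero_iff.mpr hd h00

noncomputable def altPowPoly (n : ℕ) : (Fin (n * (n - 1) / 2 + n) → Fin 2) → ℂ :=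
  ofWords (fun σ : Perm (Fin n) => ((Perm.sign σ : ℤ) : ℂ))
    fun σ => (powWord fun t => (σ t : ℕ)).get ∘ Fin.cast (length_powWord_perm σ).symm

lemma sum_altPowPoly_smul_mpsProd {n q : ℕ} (X : Fin 2 → Matrix (Fin q) (Fin q) ℂ) :
    ∑ j, altPowPoly n j • mpsProd X j
      = altProdMulRight (K := ℂ) n (X 1) fun k => X 0 ^ (k : ℕ) := by
  rw [altPowPoly, sum_ofWords_smul_mpsProd, altProdMulRight_apply]
  refine Finset.sum_congr rfl fun σ _ => ?_
  rw [mpsProd_get_comp_cast, prod_map_powWord]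

/-- For every `D ≥ 2` there is a homogeneous bivariate noncommutative polynomial of degree
`m ≤ 2(D−1)(2D+1)` which is a matrix polynomial identity for dimension `D−1` but not for
dimension `D`. -/
theorem stmt8 (D : ℕ) (hD : 2 ≤ D) :
    ∃ m : ℕ, 0 < m ∧ m ≤ 2 * (D - 1) * (2 * D + 1) ∧
      ∃ p : (Fin m → Fin 2) → ℂ,
        (∀ X : Fin 2 → Matrix (Fin (D - 1)) (Fin (D - 1)) ℂ,
          ∑ j : Fin m → Fin 2, p j • mpsProd X j = 0) ∧
        ∃ X : Fin 2 → Matrix (Fin D) (Fin D) ℂ,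
          ∑ j : Fin m → Fin 2, p j • mpsProd X j ≠ 0 := by
  have : NeZero D := ⟨by omega⟩
  refine ⟨D * (D - 1) / 2 + D, by omega, ?_, altPowPoly D, fun X => ?_,
    ![diagonal fun i => (i : ℂ), cycleShift D], ?_⟩
  · have := Nat.div_le_self (D * (D - 1)) 2
    obtain ⟨k, rfl⟩ : ∃ k, D = k + 2 := ⟨D - 2, by omega⟩
    rw [show k + 2 - 1 = k + 1 from rfl] at this ⊢
    nlinarith
  · rw [sum_altPowPoly_smul_mpsProd]
    exact AlternatingMap.map_linearDependent _ _
      (not_linearIndependent_pow_of_card_lt (X 0) (by rw [Fintype.card_fin]; omega))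
  · rw [sum_altPowPoly_smul_mpsProd]
    exact altProdMulRight_cycleShift_ne_zero
      ((Nat.cast_injective (R := ℂ)).comp Fin.val_injective)
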